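/- Let (V,⟨·,·⟩) be a finite-dimensional real vector space with a positive definite inner product, D an antisymmetric endomorphism of V (⟨Dx,y⟩ = −⟨x,Dy⟩) with D² = −id, and θ an isometric involution of V with D∘θ = −θ∘D. Set V₋ := ker(θ + id). Then the map φ ↦ b_φ, where b_φ(x,y) := ⟨φ(Dx), y⟩ for x,y ∈ V₋, is a linear isomorphism from the space {φ : V → V linear : ⟨φx,y⟩ = −⟨x,φy⟩, φ∘D = D∘φ, φ∘θ = −θ∘φ} onto the space of symmetric bilinear forms on V₋. -/

import Mathlib

/-!
The involution `θ` splits `V` into the `B`-orthogonal eigenspaces `V₊ ⊕ V₋`, and `D` exchanges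
them. Given a symmetric form `b` on `V₋`, let `S` be the `B`-symmetric endomorphism of `V`
representing `b` on `V₋` and vanishing on `V₊`; then `φ := -(D S + S D)` is antisymmetric,
commutes with `D`, anticommutes with `θ`, and satisfies `φ (D x) = S x` on `V₋`, so `b_φ = b`.
Conversely, for `φ` in the given space, the `S` built from `b_φ` is `φ D` on `V₋`, and
`-(D S + S D)` recovers `φ`. Thus `b ↦ -(D S + S D)` is a two-sided inverse of `φ ↦ b_φ`.
-/

open LinearMap

/-- The map φ ↦ b_φ, b_φ(x,y) = ⟨φ(Dx),y⟩ on V₋ = ker(θ + id). -/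
noncomputable def iota8 {V : Type*} [AddCommGroup V] [Module ℝ V]
    (B : LinearMap.BilinForm ℝ V) (D θ : V →ₗ[ℝ] V) (φ : V →ₗ[ℝ] V) :
    LinearMap.BilinForm ℝ ↥(LinearMap.ker (θ + LinearMap.id)) :=
  B.compl₁₂ (φ ∘ₗ D ∘ₗ (LinearMap.ker (θ + LinearMap.id)).subtype)
    ((LinearMap.ker (θ + LinearMap.id)).subtype)

section

variable {V : Type*} [AddCommGroup V] [Module ℝ V] {B : LinearMap.BilinForm ℝ V}
  {D θ : V →ₗ[ℝ] V}

theorem mem_ker_add_id_iff {v : V} : v ∈ ker (θ + LinearMap.id) ↔ θ v = -v := by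
  rw [mem_ker, LinearMap.add_apply, LinearMap.id_apply, add_eq_zero_iff_eq_neg]

theorem isProj_half_id_sub (hθ : ∀ v, θ (θ v) = v) :
    IsProj (ker (θ + LinearMap.id)) ((2⁻¹ : ℝ) • (LinearMap.id - θ)) where
  map_mem v := by
    rw [mem_ker_add_id_iff]
    simp only [LinearMap.smul_apply, LinearMap.sub_apply, LinearMap.id_apply, map_smul, map_sub,
      hθ]
    module
  map_id v hv := by
    rw [mem_ker_add_id_iff] at hv
    simp only [LinearMap.smul_apply, LinearMap.sub_apply, LinearMap.id_apply, hv]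
    module

theorem map_apply_eq_self_of_anticomm (hDθ : ∀ v, D (θ v) = -θ (D v)) {x : V} (hx : θ x = -x) :
    θ (D x) = D x := by
  rw [← neg_neg (θ (D x)), ← hDθ, hx, map_neg, neg_neg]

theorem apply_eq_zero_of_map_eq_neg_of_map_eq_self (hθB : ∀ x y, B (θ x) (θ y) = B x y)
    {z u : V} (hz : θ z = -z) (hu : θ u = u) : B z u = 0 := by
  have h := hθB z u
  rw [hz, hu, map_neg, LinearMap.neg_apply] at h
  linarith

noncomputable def negProj (hθ : ∀ v, θ (θ v) = v) : V →ₗ[ℝ] ker (θ + LinearMap.id) :=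
  (isProj_half_id_sub hθ).codRestrict

theorem coe_negProj_apply (hθ : ∀ v, θ (θ v) = v) (v : V) :
    (negProj hθ v : V) = (2⁻¹ : ℝ) • (v - θ v) := by
  simp [negProj]

theorem negProj_apply_coe (hθ : ∀ v, θ (θ v) = v) (x : ker (θ + LinearMap.id)) :
    negProj hθ x = x :=
  IsProj.codRestrict_apply_cod _ x

theorem negProj_map (hθ : ∀ v, θ (θ v) = v) (v : V) : negProj hθ (θ v) = -negProj hθ v := by
  ext
  simp only [coe_negProj_apply, Submodule.coe_neg, hθ]
  module

theorem apply_negProj_right (hθ : ∀ v, θ (θ v) = v) (hθB : ∀ x y, B (θ x) (θ y) = B x y)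
    {z : V} (hz : θ z = -z) (w : V) : B z (negProj hθ w) = B z w := by
  have hfix : θ ((2⁻¹ : ℝ) • (w + θ w)) = (2⁻¹ : ℝ) • (w + θ w) := by
    rw [map_smul, map_add, hθ, add_comm]
  have hsplit : w = (2⁻¹ : ℝ) • (w + θ w) + negProj hθ w := by
    rw [coe_negProj_apply]
    module
  conv_rhs =>
    rw [hsplit, map_add, apply_eq_zero_of_map_eq_neg_of_map_eq_self hθB hz hfix, zero_add]

theorem apply_map_left_of_isometry (hθ : ∀ v, θ (θ v) = v)
    (hθB : ∀ x y, B (θ x) (θ y) = B x y) (x y : V) : B (θ x) y = B x (θ y) := by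
  rw [← hθB, hθ]

theorem nondegenerate_of_pos (hpos : ∀ x, x ≠ 0 → 0 < B x x) : B.Nondegenerate :=
  ⟨fun x hx => by_contra fun h => (hpos x h).ne' (hx x),
    fun y hy => by_contra fun h => (hpos y h).ne' (hy y)⟩

theorem eq_of_forall_apply_eq (hB : B.SeparatingLeft) {x y : V} (h : ∀ w, B x w = B y w) :
    x = y :=
  sub_eq_zero.1 <| hB _ fun w => by rw [map_sub, LinearMap.sub_apply, h, sub_self]

theorem iota8_apply (φ : V →ₗ[ℝ] V) (x y : ker (θ + LinearMap.id)) :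
    iota8 B D θ φ x y = B (φ (D x)) y :=
  rfl

theorem iota8_add (φ ψ : V →ₗ[ℝ] V) : iota8 B D θ (φ + ψ) = iota8 B D θ φ + iota8 B D θ ψ := by
  ext x y
  simp only [iota8_apply, LinearMap.add_apply, map_add]

theorem iota8_smul (c : ℝ) (φ : V →ₗ[ℝ] V) : iota8 B D θ (c • φ) = c • iota8 B D θ φ := by
  ext x y
  simp only [iota8_apply, LinearMap.smul_apply, map_smul, smul_eq_mul]

theorem iota8_apply_comm (hBsymm : ∀ x y, B x y = B y x)
    (hDB : ∀ x y, B (D x) y = -B x (D y)) {φ : V →ₗ[ℝ] V} (hφB : ∀ x y, B (φ x) y = -B x (φ y))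
    (hφD : ∀ v, φ (D v) = D (φ v)) (x y : ker (θ + LinearMap.id)) :
    iota8 B D θ φ x y = iota8 B D θ φ y x := by
  simp only [iota8_apply]
  calc B (φ (D x)) y = -B (D x) (φ y) := hφB _ _
    _ = B x (φ (D y)) := by rw [hDB, neg_neg, hφD]
    _ = B (φ (D y)) x := hBsymm _ _

variable [FiniteDimensional ℝ V]

noncomputable def symmEndOfForm (hB : B.Nondegenerate) (hθ : ∀ v, θ (θ v) = v)
    (b : LinearMap.BilinForm ℝ (ker (θ + LinearMap.id))) : V →ₗ[ℝ] V :=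
  LinearMap.BilinForm.symmCompOfNondegenerate (b.compl₁₂ (negProj hθ) (negProj hθ)) B hB

-- `S := symmEndOfForm` vanishes on `V₊ = D V₋`, so this is `-D S` on `V₋` and `D x ↦ S x` on `V₊`.
noncomputable def iota8Inv (D : V →ₗ[ℝ] V) (hB : B.Nondegenerate) (hθ : ∀ v, θ (θ v) = v)
    (b : LinearMap.BilinForm ℝ (ker (θ + LinearMap.id))) : V →ₗ[ℝ] V :=
  -(D ∘ₗ symmEndOfForm hB hθ b + symmEndOfForm hB hθ b ∘ₗ D)

variable {hB : B.Nondegenerate} {hθ : ∀ v, θ (θ v) = v}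
  {b : LinearMap.BilinForm ℝ (ker (θ + LinearMap.id))}

theorem apply_symmEndOfForm (u w : V) :
    B (symmEndOfForm hB hθ b u) w = b (negProj hθ u) (negProj hθ w) :=
  LinearMap.BilinForm.symmCompOfNondegenerate_left_apply _ hB w u

theorem symmEndOfForm_map (u : V) : symmEndOfForm hB hθ b (θ u) = -symmEndOfForm hB hθ b u :=
  eq_of_forall_apply_eq hB.1 fun w => by
    rw [apply_symmEndOfForm, map_neg, LinearMap.neg_apply, apply_symmEndOfForm, negProj_map,
      map_neg, LinearMap.neg_apply]

theorem map_symmEndOfForm (hθB : ∀ x y, B (θ x) (θ y) = B x y) (u : V) :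
    θ (symmEndOfForm hB hθ b u) = -symmEndOfForm hB hθ b u :=
  eq_of_forall_apply_eq hB.1 fun w => by
    rw [apply_map_left_of_isometry hθ hθB, apply_symmEndOfForm, negProj_map, map_neg,
      map_neg, LinearMap.neg_apply, apply_symmEndOfForm]

theorem apply_symmEndOfForm_comm (hBsymm : ∀ x y, B x y = B y x) (hb : ∀ x y, b x y = b y x)
    (u w : V) : B (symmEndOfForm hB hθ b u) w = B u (symmEndOfForm hB hθ b w) := by
  rw [apply_symmEndOfForm, hBsymm u, apply_symmEndOfForm, hb]

theorem iota8Inv_apply (v : V) :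
    iota8Inv D hB hθ b v = -D (symmEndOfForm hB hθ b v) - symmEndOfForm hB hθ b (D v) := by
  simp only [iota8Inv, LinearMap.neg_apply, LinearMap.add_apply, LinearMap.comp_apply]
  abel

theorem iota8Inv_antisymm (hBsymm : ∀ x y, B x y = B y x) (hDB : ∀ x y, B (D x) y = -B x (D y))
    (hb : ∀ x y, b x y = b y x) (x y : V) :
    B (iota8Inv D hB hθ b x) y = -B x (iota8Inv D hB hθ b y) := by
  simp only [iota8Inv_apply, map_sub, map_neg, LinearMap.sub_apply, LinearMap.neg_apply, hDB,
    apply_symmEndOfForm_comm hBsymm hb]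
  ring

theorem iota8Inv_comp_comm (hD : ∀ v, D (D v) = -v) :
    iota8Inv D hB hθ b ∘ₗ D = D ∘ₗ iota8Inv D hB hθ b := by
  ext v
  simp only [LinearMap.comp_apply, iota8Inv_apply, hD, map_neg, map_sub]
  abel

theorem iota8Inv_comp_anticomm (hθB : ∀ x y, B (θ x) (θ y) = B x y)
    (hDθ : ∀ v, D (θ v) = -θ (D v)) :
    iota8Inv D hB hθ b ∘ₗ θ = -(θ ∘ₗ iota8Inv D hB hθ b) := by
  ext v
  simp only [LinearMap.comp_apply, LinearMap.neg_apply, iota8Inv_apply, hDθ, map_neg, map_sub,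
    symmEndOfForm_map]
  rw [map_apply_eq_self_of_anticomm hDθ (map_symmEndOfForm hθB v), map_symmEndOfForm hθB]
  abel

theorem iota8_iota8Inv (hD : ∀ v, D (D v) = -v) (hDθ : ∀ v, D (θ v) = -θ (D v)) :
    iota8 B D θ (iota8Inv D hB hθ b) = b := by
  ext x y
  have hx : θ x = -x := mem_ker_add_id_iff.1 x.2
  have hSDx : symmEndOfForm hB hθ b (D x) = 0 := by
    have h := symmEndOfForm_map (hB := hB) (hθ := hθ) (b := b) (D x)
    rw [map_apply_eq_self_of_anticomm hDθ hx] at h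
    linear_combination (norm := module) (2⁻¹ : ℝ) • h
  rw [iota8_apply, iota8Inv_apply, hSDx, hD, map_zero, map_neg, neg_zero, zero_sub, neg_neg,
    apply_symmEndOfForm, negProj_apply_coe, negProj_apply_coe]

theorem iota8Inv_iota8 (hθB : ∀ x y, B (θ x) (θ y) = B x y) (hD : ∀ v, D (D v) = -v)
    (hDθ : ∀ v, D (θ v) = -θ (D v)) {φ : V →ₗ[ℝ] V} (hφD : ∀ v, φ (D v) = D (φ v))
    (hφθ : ∀ v, φ (θ v) = -θ (φ v)) :
    iota8Inv D hB hθ (iota8 B D θ φ) = φ := by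
  have hS : ∀ u, symmEndOfForm hB hθ (iota8 B D θ φ) u = φ (D (negProj hθ u)) := fun u =>
    eq_of_forall_apply_eq hB.1 fun w => by
      have hneg : θ (φ (D (negProj hθ u))) = -φ (D (negProj hθ u)) := by
        rw [← neg_neg (θ _), ← hφθ,
          map_apply_eq_self_of_anticomm hDθ (mem_ker_add_id_iff.1 (negProj hθ u).2)]
      rw [apply_symmEndOfForm, iota8_apply, apply_negProj_right hθ hθB hneg]
  ext v
  simp only [iota8Inv_apply, hS, coe_negProj_apply, map_smul, map_sub, ← hφD, hD, hDθ, map_neg]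
  module

end

/-- For a positive definite space (V,⟨·,·⟩) with antisymmetric D, D² = −id, and isometric
involution θ anticommuting with D, the map φ ↦ ⟨φ(D·),·⟩ is a linear bijection from the
antisymmetric endomorphisms commuting with D and anticommuting with θ onto the symmetric
bilinear forms on V₋. -/
theorem stmt8 {V : Type*} [AddCommGroup V] [Module ℝ V] [FiniteDimensional ℝ V]
    (B : LinearMap.BilinForm ℝ V)
    (hsymm : ∀ x y, B x y = B y x)
    (hpos : ∀ x : V, x ≠ 0 → 0 < B x x)
    (D : V →ₗ[ℝ] V)
    (hDskew : ∀ x y, B (D x) y = -(B x (D y)))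
    (hD2 : D ∘ₗ D = -LinearMap.id)
    (θ : V →ₗ[ℝ] V)
    (hθ2 : θ ∘ₗ θ = LinearMap.id)
    (hθiso : ∀ x y, B (θ x) (θ y) = B x y)
    (hDθ : D ∘ₗ θ = -(θ ∘ₗ D)) :
    (∀ φ ψ : V →ₗ[ℝ] V, iota8 B D θ (φ + ψ) = iota8 B D θ φ + iota8 B D θ ψ) ∧
      (∀ (c : ℝ) (φ : V →ₗ[ℝ] V), iota8 B D θ (c • φ) = c • iota8 B D θ φ) ∧
      Set.BijOn (iota8 B D θ)
        {φ : V →ₗ[ℝ] V | (∀ x y, B (φ x) y = -(B x (φ y))) ∧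
          φ ∘ₗ D = D ∘ₗ φ ∧ φ ∘ₗ θ = -(θ ∘ₗ φ)}
        {b : LinearMap.BilinForm ℝ ↥(LinearMap.ker (θ + LinearMap.id)) |
          ∀ x y, b x y = b y x} := by
  have hθ : ∀ v, θ (θ v) = v := LinearMap.congr_fun hθ2
  have hD : ∀ v, D (D v) = -v := LinearMap.congr_fun hD2
  have hDθ' : ∀ v, D (θ v) = -θ (D v) := LinearMap.congr_fun hDθ
  have hB : B.Nondegenerate := nondegenerate_of_pos hpos
  refine ⟨iota8_add, iota8_smul, Set.InvOn.bijOn (f' := iota8Inv D hB hθ) ⟨?_, ?_⟩ ?_ ?_⟩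
  · rintro φ ⟨-, hφD, hφθ⟩
    exact iota8Inv_iota8 hθiso hD hDθ' (LinearMap.congr_fun hφD) (LinearMap.congr_fun hφθ)
  · exact fun b _ => iota8_iota8Inv hD hDθ'
  · rintro φ ⟨hφB, hφD, -⟩
    exact iota8_apply_comm hsymm hDskew hφB (LinearMap.congr_fun hφD)
  · exact fun b hb => ⟨iota8Inv_antisymm hsymm hDskew hb, iota8Inv_comp_comm hD,
      iota8Inv_comp_anticomm hθiso hDθ'⟩
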